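/- Let m, k ≥ 1, n = m + k, with stationary linear constraints α_ν = Σ_{j=1}^m a_{ν,j}(q₁,…,qₙ) q̇_j (C² coefficients independent of t), a C² kinetic energy T independent of t, a C² potential U = U(q₁,…,qₙ) independent of t, T* the restriction of T obtained by substituting q̇_{m+ν} = α_ν, and L* := T* + U (so that ∂L*/∂t = 0). Define B_i^ν as in the Voronec-type formalism. Then along every C² admissible curve q(t) (q̇_{m+ν} = α_ν along the curve) satisfying the equations of motion d/dt(∂T*/∂q̇_i) − ∂T*/∂q_i − Σ_{ν=1}^k (∂T*/∂q_{m+ν}) a_{ν,i} − Σ_{ν=1}^k B_i^ν ∂T/∂q̇_{m+ν} = ∂U/∂q_i + Σ_{ν=1}^k a_{ν,i} ∂U/∂q_{m+ν} for i = 1,…,m, the quantity I := Σ_{i=1}^m q̇_i ∂L*/∂q̇_i − L*, evaluated along the curve, is constant in t. Moreover, if T = (1/2) Σ_{i,j=1}^n g_{i,j}(q) q̇_i q̇_j + Σ_{i=1}^n b_i(q) q̇_i + c(q), then I = Σ_{r,s=1}^m [ (1/2) g_{r,s} + (1/2) Σ_{ν,μ=1}^k g_{m+ν,m+μ} a_{ν,r}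 a_{μ,s} + Σ_{ν=1}^k g_{r,m+ν} a_{ν,s} ] q̇_r q̇_s − U − c. -/

import Mathlib

open scoped BigOperators

noncomputable section

/-- A (time-independent) phase point: positions `q ∈ ℝⁿ` and independent velocities
`v ∈ ℝᵐ`. -/
abbrev PhasePt (n m : ℕ) : Type := (Fin n → ℝ) × (Fin m → ℝ)

/-- Partial derivative with respect to the coordinate `q i`. -/
def pq {n m : ℕ} (f : PhasePt n m → ℝ) (i : Fin n) (p : PhasePt n m) : ℝ :=
  fderiv ℝ f p (Pi.single i 1, 0)

/-- Partial derivative with respect to the independent velocity `q̇ r`. -/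
def pv {n m : ℕ} (f : PhasePt n m → ℝ) (r : Fin m) (p : PhasePt n m) : ℝ :=
  fderiv ℝ f p (0, Pi.single r 1)

variable {m k : ℕ}

/-- The independent velocities along a curve. -/
def ivel (q : ℝ → Fin (m + k) → ℝ) (t : ℝ) : Fin m → ℝ :=
  fun i => deriv q t (Fin.castAdd k i)

/-- The phase-space lift of a curve. -/
def plift (q : ℝ → Fin (m + k) → ℝ) (t : ℝ) : PhasePt (m + k) m :=
  (q t, ivel q t)

/-- The stationary linear constraint functions `α ν = ∑ j a ν j (q) q̇ j`. -/
def alin (a : Fin k → Fin m → (Fin (m + k) → ℝ) → ℝ) (ν : Fin k) (p : PhasePt (m + k) m) : ℝ :=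
  ∑ j : Fin m, a ν j p.1 * p.2 j

/-- Admissibility: `q̇ (m+ν) = α ν` along the curve. -/
def Admissible (a : Fin k → Fin m → (Fin (m + k) → ℝ) → ℝ) (q : ℝ → Fin (m + k) → ℝ) : Prop :=
  ∀ (t : ℝ) (ν : Fin k), deriv q t (Fin.natAdd m ν) = alin a ν (plift q t)

/-- The full velocity vector `(q̇ ₁,…,q̇ _m, α₁,…,α_k)`. -/
def extVel (a : Fin k → Fin m → (Fin (m + k) → ℝ) → ℝ) (p : PhasePt (m + k) m) :
    Fin (m + k) → ℝ :=
  Fin.append p.2 (fun ν => alin a ν p)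

/-- The restriction `T*` of the kinetic energy. -/
def subst (a : Fin k → Fin m → (Fin (m + k) → ℝ) → ℝ)
    (T : (Fin (m + k) → ℝ) × (Fin (m + k) → ℝ) → ℝ) (p : PhasePt (m + k) m) : ℝ :=
  T (p.1, extVel a p)

/-- `∂T/∂q̇ (m+ν)` with the dependent velocities replaced via the constraints. -/
def pvT (a : Fin k → Fin m → (Fin (m + k) → ℝ) → ℝ)
    (T : (Fin (m + k) → ℝ) × (Fin (m + k) → ℝ) → ℝ) (ν : Fin k) (p : PhasePt (m + k) m) : ℝ :=
  fderiv ℝ T (p.1, extVel a p) (0, Pi.single (Fin.natAdd m ν) 1)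

/-- The classical Voronec coefficients `β ν i r` for stationary linear constraints. -/
def betaCoef (a : Fin k → Fin m → (Fin (m + k) → ℝ) → ℝ) (ν : Fin k) (i r : Fin m)
    (x : Fin (m + k) → ℝ) : ℝ :=
  fderiv ℝ (a ν i) x (Pi.single (Fin.castAdd k r) 1)
    - fderiv ℝ (a ν r) x (Pi.single (Fin.castAdd k i) 1)
    + ∑ μ : Fin k,
        (fderiv ℝ (a ν i) x (Pi.single (Fin.natAdd m μ) 1) * a μ r x
          - fderiv ℝ (a ν r) x (Pi.single (Fin.natAdd m μ) 1) * a μ i x)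

/-- The Lagrangian `L* = T* + U`. -/
def Lag (a : Fin k → Fin m → (Fin (m + k) → ℝ) → ℝ)
    (T : (Fin (m + k) → ℝ) × (Fin (m + k) → ℝ) → ℝ) (U : (Fin (m + k) → ℝ) → ℝ)
    (p : PhasePt (m + k) m) : ℝ :=
  subst a T p + U p.1

/-- The generalized energy `∑ i q̇ i ∂L*/∂q̇ i − L*` along a curve. -/
def energy (L : PhasePt (m + k) m → ℝ) (q : ℝ → Fin (m + k) → ℝ) (t : ℝ) : ℝ :=
  (∑ i : Fin m, ivel q t i * pv L i (plift q t)) - L (plift q t)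

/-! Along an admissible curve the full velocity is `(q̇ᵢ, Σⱼ a_{ν,j} q̇ⱼ)`, so the power `Σⱼ q̇ⱼ ∂L*/∂qⱼ` equals
`Σᵢ q̇ᵢ (∂L*/∂qᵢ + Σ_ν a_{ν,i} ∂L*/∂q_{m+ν})`. In `dI/dt` the terms in `q̈` cancel, and the
equations of motion leave `dI/dt = Σᵢ q̇ᵢ Σ_ν B_i^ν ∂T/∂q̇_{m+ν}`, which vanishes because
`β_{ir}^ν` is antisymmetric in `i, r`: the constraint terms do no work.

For the explicit form, `s ↦ T*(q, s q̇)` is `s² T₂ + s T₁ + c` with `T₂ = ½ Σ g_{ij} q̇ᵢ q̇ⱼ` over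
all `n` velocities, so Euler's identity gives `Σᵢ q̇ᵢ ∂T*/∂q̇ᵢ = 2 T₂ + T₁` and `I = T₂ − U − c`.
Expanding `T₂` in the independent velocities gives (27); the two mixed blocks coincide by the
symmetry of `g`. -/

open Finset

section PhaseSpace

variable {n : ℕ}

theorem fderiv_apply_eq_sum_pq_add_sum_pv (f : PhasePt n m → ℝ) (p : PhasePt n m)
    (x : Fin n → ℝ) (v : Fin m → ℝ) :
    fderiv ℝ f p (x, v) = ∑ j, x j * pq f j p + ∑ i, v i * pv f i p := by
  conv_lhs => rw [← (fderiv ℝ f p).comp_inl_add_comp_inr, pi_eq_sum_univ' x, pi_eq_sum_univ' v]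
  simp [pq, pv, map_sum, map_smul]

theorem HasDerivAt.comp_phasePt {f : PhasePt n m → ℝ} {γ : ℝ → PhasePt n m}
    {x : Fin n → ℝ} {v : Fin m → ℝ} {t : ℝ} (hf : DifferentiableAt ℝ f (γ t))
    (hγ : HasDerivAt γ (x, v) t) :
    HasDerivAt (fun s => f (γ s)) (∑ j, x j * pq f j (γ t) + ∑ i, v i * pv f i (γ t)) t := by
  rw [← fderiv_apply_eq_sum_pq_add_sum_pv]
  exact hf.hasFDerivAt.comp_hasDerivAt t hγ

theorem sum_mul_pv_eq_of_quadratic {f : PhasePt n m → ℝ} {p : PhasePt n m} {A B C : ℝ}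
    (hf : DifferentiableAt ℝ f p) (hquad : ∀ s : ℝ, f (p.1, s • p.2) = s ^ 2 * A + s * B + C) :
    ∑ i, p.2 i * pv f i p = 2 * A + B := by
  have hray : HasDerivAt (fun s : ℝ => (p.1, s • p.2)) (0, p.2) 1 := by
    simpa using (hasDerivAt_const (1 : ℝ) p.1).prodMk ((hasDerivAt_id (1 : ℝ)).smul_const p.2)
  have hf' : DifferentiableAt ℝ f (p.1, (1 : ℝ) • p.2) := by simpa using hf
  have hderiv := hray.comp_phasePt hf'
  simp only [one_smul, Pi.zero_apply, zero_mul, sum_const_zero, zero_add, hquad] at hderiv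
  refine hderiv.unique ?_
  simpa using (((hasDerivAt_pow 2 (1 : ℝ)).mul_const A).add
    ((hasDerivAt_id (1 : ℝ)).mul_const B)).add_const C

theorem hasFDerivAt_add_comp_fst {f : PhasePt n m → ℝ} {U : (Fin n → ℝ) → ℝ} {p : PhasePt n m}
    (hf : DifferentiableAt ℝ f p) (hU : DifferentiableAt ℝ U p.1) :
    HasFDerivAt (fun p => f p + U p.1)
      (fderiv ℝ f p + (fderiv ℝ U p.1).comp (ContinuousLinearMap.fst ℝ _ _)) p :=
  hf.hasFDerivAt.add (hU.hasFDerivAt.comp p hasFDerivAt_fst)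

theorem pv_add_comp_fst {f : PhasePt n m → ℝ} {U : (Fin n → ℝ) → ℝ} {p : PhasePt n m}
    (hf : DifferentiableAt ℝ f p) (hU : DifferentiableAt ℝ U p.1) (i : Fin m) :
    pv (fun p => f p + U p.1) i p = pv f i p := by
  simp [pv, hasFDerivAt_add_comp_fst hf hU |>.fderiv]

theorem pq_add_comp_fst {f : PhasePt n m → ℝ} {U : (Fin n → ℝ) → ℝ} {p : PhasePt n m}
    (hf : DifferentiableAt ℝ f p) (hU : DifferentiableAt ℝ U p.1) (j : Fin n) :
    pq (fun p => f p + U p.1) j p = pq f j p + fderiv ℝ U p.1 (Pi.single j 1) := by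
  simp [pq, hasFDerivAt_add_comp_fst hf hU |>.fderiv]

theorem contDiff_pv {r : WithTop ℕ∞} {f : PhasePt n m → ℝ} (hf : ContDiff ℝ (r + 1) f)
    (i : Fin m) : ContDiff ℝ r (pv f i) :=
  (ContinuousLinearMap.apply ℝ ℝ ((0 : Fin n → ℝ), (Pi.single i 1 : Fin m → ℝ))).contDiff.comp
    (hf.fderiv_right le_rfl)

end PhaseSpace

section FiniteSums

variable {ι κ ρ σ : Type*} [Fintype ι] [Fintype κ] [Fintype ρ] [Fintype σ]

theorem sum_sum_mul_mul_sum (G : ι → κ → ℝ) (B : κ → σ → ℝ) (u : ι → ℝ) (v : σ → ℝ) :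
    ∑ i, ∑ j, G i j * u i * ∑ s, B j s * v s = ∑ i, ∑ s, (∑ j, G i j * B j s) * u i * v s := by
  simp only [mul_sum, sum_mul]
  exact sum_congr rfl fun i _ => sum_comm.trans (sum_congr rfl fun _ _ => sum_congr rfl
    fun _ _ => by ring)

theorem sum_sum_sum_mul_mul (G : ι → κ → ℝ) (A : ι → ρ → ℝ) (u : ρ → ℝ) (v : κ → ℝ) :
    ∑ i, ∑ j, G i j * (∑ r, A i r * u r) * v j = ∑ r, ∑ j, (∑ i, A i r * G i j) * u r * v j := by
  simp only [mul_sum, sum_mul]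
  refine sum_comm.trans <| (sum_congr rfl fun _ _ => sum_comm).trans <| sum_comm.trans ?_
  exact sum_congr rfl fun _ _ => sum_congr rfl fun _ _ => sum_congr rfl fun _ _ => by ring

theorem sum_sum_mul_mul_eq_zero_of_antisymm {β : ι → ι → ℝ}
    (hβ : ∀ i r, β i r = -β r i) (v : ι → ℝ) : ∑ i, ∑ r, β i r * v i * v r = 0 := by
  have hswap : ∑ i, ∑ r, β i r * v i * v r = -∑ i, ∑ r, β i r * v i * v r := by
    conv_lhs => rw [sum_comm]
    rw [← sum_neg_distrib]
    refine sum_congr rfl fun i _ => ?_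
    rw [← sum_neg_distrib]
    exact sum_congr rfl fun r _ => by rw [hβ r i]; ring
  linarith

end FiniteSums

section Curve

variable {q : ℝ → Fin (m + k) → ℝ}

theorem contDiff_ivel {r : WithTop ℕ∞} (hq : ContDiff ℝ (r + 1) q) : ContDiff ℝ r (ivel q) :=
  contDiff_pi.2 fun i => (contDiff_apply ℝ ℝ (Fin.castAdd k i)).comp
    ((contDiff_succ_iff_deriv.1 hq).2.2)

theorem hasDerivAt_plift (hq : ContDiff ℝ 2 q) (t : ℝ) :
    HasDerivAt (plift q) (deriv q t, deriv (ivel q) t) t :=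
  ((hq.differentiable (by norm_num)) t).hasDerivAt.prodMk
    (((contDiff_ivel (r := 1) hq).differentiable one_ne_zero) t).hasDerivAt

theorem hasDerivAt_energy {L : PhasePt (m + k) m → ℝ} (hL : ContDiff ℝ 2 L) (hq : ContDiff ℝ 2 q)
    (t : ℝ) :
    HasDerivAt (energy L q)
      (∑ i, ivel q t i * deriv (fun s => pv L i (plift q s)) t
        - ∑ j, deriv q t j * pq L j (plift q t)) t := by
  have hmomentum (i : Fin m) : HasDerivAt (fun s => pv L i (plift q s))
      (deriv (fun s => pv L i (plift q s)) t) t :=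
    (((contDiff_pv (r := 1) hL i).comp ((hq.of_le (by norm_num)).prodMk (contDiff_ivel hq))
      ).differentiable one_ne_zero t).hasDerivAt
  have hvel (i : Fin m) : HasDerivAt (fun s => ivel q s i) (deriv (ivel q) t i) t :=
    hasDerivAt_pi.1 (hasDerivAt_plift hq t).snd i
  have hL' := (hasDerivAt_plift hq t).comp_phasePt ((hL.differentiable (by norm_num)) _)
  have hsum : HasDerivAt (fun s => ∑ i, ivel q s i * pv L i (plift q s))
      (∑ i, (deriv (ivel q) t i * pv L i (plift q t)
        + ivel q t i * deriv (fun s => pv L i (plift q s)) t)) t :=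
    HasDerivAt.fun_sum fun i _ => (hvel i).mul (hmomentum i)
  refine (hsum.sub hL').congr_deriv ?_
  rw [sum_add_distrib]
  ring

end Curve

section Constraints

variable {a : Fin k → Fin m → (Fin (m + k) → ℝ) → ℝ} {r : WithTop ℕ∞}

theorem contDiff_alin (ha : ∀ ν j, ContDiff ℝ r (a ν j)) (ν : Fin k) : ContDiff ℝ r (alin a ν) :=
  ContDiff.sum fun j _ =>
    ((ha ν j).comp contDiff_fst).mul ((contDiff_apply ℝ ℝ j).comp contDiff_snd)

theorem contDiff_extVel (ha : ∀ ν j, ContDiff ℝ r (a ν j)) : ContDiff ℝ r (extVel a) := by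
  refine contDiff_pi.2 fun j => Fin.addCases (fun i => ?_) (fun ν => ?_) j
  · simp only [extVel, Fin.append_left]
    exact (contDiff_apply ℝ ℝ i).comp contDiff_snd
  · simp only [extVel, Fin.append_right]
    exact contDiff_alin ha ν

theorem contDiff_subst (ha : ∀ ν j, ContDiff ℝ r (a ν j))
    {T : (Fin (m + k) → ℝ) × (Fin (m + k) → ℝ) → ℝ} (hT : ContDiff ℝ r T) :
    ContDiff ℝ r (subst a T) :=
  hT.comp (contDiff_fst.prodMk (contDiff_extVel ha))

theorem extVel_smul (p : PhasePt (m + k) m) (s : ℝ) :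
    extVel a (p.1, s • p.2) = s • extVel a p := by
  funext j
  refine Fin.addCases (fun i => ?_) (fun ν => ?_) j
  · simp [extVel]
  · simp [extVel, alin, mul_sum, mul_left_comm]

theorem sum_extVel_mul (p : PhasePt (m + k) m) (G : Fin (m + k) → ℝ) :
    ∑ j, extVel a p j * G j
      = ∑ i, p.2 i * (G (Fin.castAdd k i) + ∑ ν, a ν i p.1 * G (Fin.natAdd m ν)) := by
  simp only [Fin.sum_univ_add, extVel, Fin.append_left, Fin.append_right, alin, mul_add,
    sum_add_distrib, sum_mul, mul_sum]
  rw [sum_comm (s := univ (α := Fin k))]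
  simp only [mul_assoc, mul_left_comm]

theorem Admissible.deriv_eq_extVel {q : ℝ → Fin (m + k) → ℝ} (hadm : Admissible a q) (t : ℝ) :
    deriv q t = extVel a (plift q t) := by
  funext j
  refine Fin.addCases (fun i => ?_) (fun ν => ?_) j
  · simp [extVel, plift, ivel]
  · simpa [extVel] using hadm t ν

theorem betaCoef_antisymm (ν : Fin k) (i r : Fin m) (x : Fin (m + k) → ℝ) :
    betaCoef a ν i r x = -betaCoef a ν r i x := by
  simp only [betaCoef, neg_add, neg_sub, ← sum_neg_distrib]

end Constraints

theorem sum_mul_sum_betaCoef_mul_eq_zero (a : Fin k → Fin m → (Fin (m + k) → ℝ) → ℝ)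
    (x : Fin (m + k) → ℝ) (v : Fin m → ℝ) (P : Fin k → ℝ) :
    ∑ i, v i * ∑ ν, (∑ r, betaCoef a ν i r x * v r) * P ν = 0 := by
  calc ∑ i, v i * ∑ ν, (∑ r, betaCoef a ν i r x * v r) * P ν
      = ∑ ν, P ν * ∑ i, ∑ r, betaCoef a ν i r x * v i * v r := by
        simp only [mul_sum, sum_mul]
        rw [sum_comm]
        exact sum_congr rfl fun _ _ => sum_congr rfl fun _ _ => sum_congr rfl fun _ _ => by ring
    _ = 0 := by
        simp [sum_sum_mul_mul_eq_zero_of_antisymm (betaCoef_antisymm (a := a) _ · · x) v]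

theorem hasDerivAt_energy_Lag_zero
    {a : Fin k → Fin m → (Fin (m + k) → ℝ) → ℝ} (ha : ∀ ν j, ContDiff ℝ 2 (a ν j))
    {T : (Fin (m + k) → ℝ) × (Fin (m + k) → ℝ) → ℝ} (hT : ContDiff ℝ 2 T)
    {U : (Fin (m + k) → ℝ) → ℝ} (hU : ContDiff ℝ 2 U)
    {q : ℝ → Fin (m + k) → ℝ} (hq : ContDiff ℝ 2 q) (hadm : Admissible a q) (t : ℝ)
    (heom : ∀ i : Fin m,
      deriv (fun s => pv (subst a T) i (plift q s)) t
        - pq (subst a T) (Fin.castAdd k i) (plift q t)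
        - (∑ ν : Fin k, pq (subst a T) (Fin.natAdd m ν) (plift q t) * a ν i (q t))
        - (∑ ν : Fin k, (∑ r : Fin m, betaCoef a ν i r (q t) * ivel q t r)
            * pvT a T ν (plift q t)) =
      fderiv ℝ U (q t) (Pi.single (Fin.castAdd k i) 1)
        + ∑ ν : Fin k, a ν i (q t) * fderiv ℝ U (q t) (Pi.single (Fin.natAdd m ν) 1)) :
    HasDerivAt (energy (Lag a T U) q) 0 t := by
  have hsub : ContDiff ℝ 2 (subst a T) := contDiff_subst ha hT
  have hdiff (p : PhasePt (m + k) m) := hsub.differentiable (by norm_num) p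
  have hUdiff (x : Fin (m + k) → ℝ) := hU.differentiable (by norm_num) x
  have hpv : ∀ i, pv (Lag a T U) i = pv (subst a T) i := fun i =>
    funext fun p => pv_add_comp_fst (hdiff p) (hUdiff p.1) i
  have hpq (j : Fin (m + k)) (p : PhasePt (m + k) m) :
      pq (Lag a T U) j p = pq (subst a T) j p + fderiv ℝ U p.1 (Pi.single j 1) :=
    pq_add_comp_fst (hdiff p) (hUdiff p.1) j
  have hbalance (i : Fin m) : deriv (fun s => pv (Lag a T U) i (plift q s)) t
      = pq (Lag a T U) (Fin.castAdd k i) (plift q t)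
        + ∑ ν, a ν i (q t) * pq (Lag a T U) (Fin.natAdd m ν) (plift q t)
        + ∑ ν, (∑ r, betaCoef a ν i r (q t) * ivel q t r) * pvT a T ν (plift q t) := by
    have h := heom i
    simp only [hpv, hpq, add_mul, sum_add_distrib, mul_comm (a _ i _), plift] at h ⊢
    linarith
  have hLag : ContDiff ℝ 2 (Lag a T U) := hsub.add (hU.comp contDiff_fst)
  refine (hasDerivAt_energy hLag hq t).congr_deriv ?_
  rw [hadm.deriv_eq_extVel t, sum_extVel_mul]
  simp only [hbalance, mul_add, sum_add_distrib, sum_mul_sum_betaCoef_mul_eq_zero]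
  rw [add_zero]
  exact sub_self _

theorem half_sum_sum_mul_extVel (a : Fin k → Fin m → (Fin (m + k) → ℝ) → ℝ)
    {G : Fin (m + k) → Fin (m + k) → ℝ} (hG : ∀ i j, G i j = G j i) (p : PhasePt (m + k) m) :
    (1 / 2) * (∑ i, ∑ j, G i j * extVel a p i * extVel a p j)
      = ∑ r, ∑ s, ((1 / 2) * G (Fin.castAdd k r) (Fin.castAdd k s)
          + (1 / 2) * (∑ ν, ∑ μ, G (Fin.natAdd m ν) (Fin.natAdd m μ) * a ν r p.1 * a μ s p.1)
          + ∑ ν, G (Fin.castAdd k r) (Fin.natAdd m ν) * a ν s p.1) * p.2 r * p.2 s := by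
  have hcross : ∑ ν, ∑ s, G (Fin.natAdd m ν) (Fin.castAdd k s) * alin a ν p * p.2 s
      = ∑ r, ∑ ν, G (Fin.castAdd k r) (Fin.natAdd m ν) * p.2 r * alin a ν p := by
    rw [sum_comm]
    exact sum_congr rfl fun _ _ => sum_congr rfl fun _ _ => by rw [hG]; ring
  have hdep : ∑ ν, ∑ μ, G (Fin.natAdd m ν) (Fin.natAdd m μ) * alin a ν p * alin a μ p
      = ∑ r, ∑ s, (∑ ν, ∑ μ, G (Fin.natAdd m ν) (Fin.natAdd m μ) * a ν r p.1 * a μ s p.1)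
          * p.2 r * p.2 s := by
    simp only [alin, sum_sum_mul_mul_sum, sum_sum_sum_mul_mul]
    refine sum_congr rfl fun _ _ => sum_congr rfl fun _ _ => ?_
    simp only [mul_sum]
    exact congrArg (· * _ * _) (sum_congr rfl fun _ _ => sum_congr rfl fun _ _ => by ring)
  have hmixed : ∑ r, ∑ ν, G (Fin.castAdd k r) (Fin.natAdd m ν) * p.2 r * alin a ν p
      = ∑ r, ∑ s, (∑ ν, G (Fin.castAdd k r) (Fin.natAdd m ν) * a ν s p.1) * p.2 r * p.2 s :=
    sum_sum_mul_mul_sum _ _ _ _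
  simp only [Fin.sum_univ_add, extVel, Fin.append_left, Fin.append_right, sum_add_distrib,
    add_mul, hcross, hdep]
  rw [hmixed]
  simp only [mul_assoc, ← mul_sum]
  ring

theorem sum_mul_pv_Lag_sub_Lag_of_quadratic
    {a : Fin k → Fin m → (Fin (m + k) → ℝ) → ℝ} {T : (Fin (m + k) → ℝ) × (Fin (m + k) → ℝ) → ℝ}
    {U : (Fin (m + k) → ℝ) → ℝ}
    {g : Fin (m + k) → Fin (m + k) → (Fin (m + k) → ℝ) → ℝ}
    {b : Fin (m + k) → (Fin (m + k) → ℝ) → ℝ} {c : (Fin (m + k) → ℝ) → ℝ}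
    (hTform : ∀ x u, T (x, u) = (1 / 2) * (∑ i, ∑ j, g i j x * u i * u j)
      + (∑ i, b i x * u i) + c x)
    {p : PhasePt (m + k) m} (hdiff : DifferentiableAt ℝ (subst a T) p)
    (hU : DifferentiableAt ℝ U p.1) :
    ∑ i, p.2 i * pv (Lag a T U) i p - Lag a T U p
      = (1 / 2) * (∑ i, ∑ j, g i j p.1 * extVel a p i * extVel a p j) - U p.1 - c p.1 := by
  have hray (s : ℝ) : subst a T (p.1, s • p.2)
      = s ^ 2 * ((1 / 2) * ∑ i, ∑ j, g i j p.1 * extVel a p i * extVel a p j)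
        + s * ∑ i, b i p.1 * extVel a p i + c p.1 := by
    simp only [subst, extVel_smul, hTform, Pi.smul_apply, smul_eq_mul, mul_sum]
    congr 2
    · exact sum_congr rfl fun _ _ => sum_congr rfl fun _ _ => by ring
    · exact sum_congr rfl fun _ _ => by ring
  have hpv (i : Fin m) : pv (Lag a T U) i p = pv (subst a T) i p :=
    pv_add_comp_fst hdiff hU i
  simp only [hpv, sum_mul_pv_eq_of_quadratic hdiff hray]
  change _ - (T (p.1, extVel a p) + U p.1) = _
  rw [hTform]
  ring

theorem jacobi_integral_conserved_general
    (m k : ℕ)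
    (a : Fin k → Fin m → (Fin (m + k) → ℝ) → ℝ) (ha : ∀ ν j, ContDiff ℝ 2 (a ν j))
    (T : (Fin (m + k) → ℝ) × (Fin (m + k) → ℝ) → ℝ) (hT : ContDiff ℝ 2 T)
    (U : (Fin (m + k) → ℝ) → ℝ) (hU : ContDiff ℝ 2 U)
    (q : ℝ → Fin (m + k) → ℝ) (hq : ContDiff ℝ 2 q)
    (hadm : Admissible a q)
    (heom : ∀ (t : ℝ) (i : Fin m),
      deriv (fun s => pv (subst a T) i (plift q s)) t
        - pq (subst a T) (Fin.castAdd k i) (plift q t)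
        - (∑ ν : Fin k, pq (subst a T) (Fin.natAdd m ν) (plift q t) * a ν i (q t))
        - (∑ ν : Fin k, (∑ r : Fin m, betaCoef a ν i r (q t) * ivel q t r)
            * pvT a T ν (plift q t)) =
      fderiv ℝ U (q t) (Pi.single (Fin.castAdd k i) 1)
        + ∑ ν : Fin k, a ν i (q t) * fderiv ℝ U (q t) (Pi.single (Fin.natAdd m ν) 1)) :
    (∀ t₁ t₂ : ℝ, energy (Lag a T U) q t₁ = energy (Lag a T U) q t₂) ∧
    (∀ (g : Fin (m + k) → Fin (m + k) → (Fin (m + k) → ℝ) → ℝ)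
        (b : Fin (m + k) → (Fin (m + k) → ℝ) → ℝ) (c : (Fin (m + k) → ℝ) → ℝ),
      (∀ i j x, g i j x = g j i x) →
      (∀ (x u : Fin (m + k) → ℝ),
        T (x, u) = (1 / 2) * (∑ i : Fin (m + k), ∑ j : Fin (m + k), g i j x * u i * u j)
          + (∑ i : Fin (m + k), b i x * u i) + c x) →
      ∀ t : ℝ,
        energy (Lag a T U) q t =
          (∑ r : Fin m, ∑ s : Fin m,
            ((1 / 2) * g (Fin.castAdd k r) (Fin.castAdd k s) (q t)
              + (1 / 2) * (∑ ν : Fin k, ∑ μ : Fin k,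
                  g (Fin.natAdd m ν) (Fin.natAdd m μ) (q t) * a ν r (q t) * a μ s (q t))
              + (∑ ν : Fin k, g (Fin.castAdd k r) (Fin.natAdd m ν) (q t) * a ν s (q t)))
            * ivel q t r * ivel q t s)
          - U (q t) - c (q t)) := by
  refine ⟨fun t₁ t₂ => ?_, fun g b c hg hTform t => ?_⟩
  · have hconst (t : ℝ) := hasDerivAt_energy_Lag_zero ha hT hU hq hadm t (heom t)
    exact is_const_of_deriv_eq_zero (fun t => (hconst t).differentiableAt)
      (fun t => (hconst t).deriv) t₁ t₂
  · have hdiff := (contDiff_subst ha hT).differentiable (by norm_num) (plift q t)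
    exact (sum_mul_pv_Lag_sub_Lag_of_quadratic hTform hdiff
      (hU.differentiable (by norm_num) (q t))).trans (congrArg (· - U (q t) - c (q t))
        (half_sum_sum_mul_extVel a (hg · · (q t)) (plift q t)))

/-- Corollary 2 of the paper.  For stationary linear constraints,
time-independent kinetic energy and potential, the generalized energy (Jacobi) integral
`I = ∑ i q̇ i ∂L*/∂q̇ i − L*` is conserved along every admissible solution of the
Voronec equations of motion; moreover, if `T = ½ ∑ g i j q̇ i q̇ j + ∑ b i q̇ i + c`
with `g` symmetric, then `I` has the explicit form (27). -/
theorem jacobi_integral_conserved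
    (m k : ℕ) (hm : 1 ≤ m) (hk : 1 ≤ k)
    (a : Fin k → Fin m → (Fin (m + k) → ℝ) → ℝ) (ha : ∀ ν j, ContDiff ℝ 2 (a ν j))
    (T : (Fin (m + k) → ℝ) × (Fin (m + k) → ℝ) → ℝ) (hT : ContDiff ℝ 2 T)
    (U : (Fin (m + k) → ℝ) → ℝ) (hU : ContDiff ℝ 2 U)
    (q : ℝ → Fin (m + k) → ℝ) (hq : ContDiff ℝ 2 q)
    (hadm : Admissible a q)
    (heom : ∀ (t : ℝ) (i : Fin m),
      deriv (fun s => pv (subst a T) i (plift q s)) t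
        - pq (subst a T) (Fin.castAdd k i) (plift q t)
        - (∑ ν : Fin k, pq (subst a T) (Fin.natAdd m ν) (plift q t) * a ν i (q t))
        - (∑ ν : Fin k, (∑ r : Fin m, betaCoef a ν i r (q t) * ivel q t r)
            * pvT a T ν (plift q t)) =
      fderiv ℝ U (q t) (Pi.single (Fin.castAdd k i) 1)
        + ∑ ν : Fin k, a ν i (q t) * fderiv ℝ U (q t) (Pi.single (Fin.natAdd m ν) 1)) :
    (∀ t₁ t₂ : ℝ, energy (Lag a T U) q t₁ = energy (Lag a T U) q t₂) ∧
    (∀ (g : Fin (m + k) → Fin (m + k) → (Fin (m + k) → ℝ) → ℝ)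
        (b : Fin (m + k) → (Fin (m + k) → ℝ) → ℝ) (c : (Fin (m + k) → ℝ) → ℝ),
      (∀ i j x, g i j x = g j i x) →
      (∀ (x u : Fin (m + k) → ℝ),
        T (x, u) = (1 / 2) * (∑ i : Fin (m + k), ∑ j : Fin (m + k), g i j x * u i * u j)
          + (∑ i : Fin (m + k), b i x * u i) + c x) →
      ∀ t : ℝ,
        energy (Lag a T U) q t =
          (∑ r : Fin m, ∑ s : Fin m,
            ((1 / 2) * g (Fin.castAdd k r) (Fin.castAdd k s) (q t)
              + (1 / 2) * (∑ ν : Fin k, ∑ μ : Fin k,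
                  g (Fin.natAdd m ν) (Fin.natAdd m μ) (q t) * a ν r (q t) * a μ s (q t))
              + (∑ ν : Fin k, g (Fin.castAdd k r) (Fin.natAdd m ν) (q t) * a ν s (q t)))
            * ivel q t r * ivel q t s)
          - U (q t) - c (q t)) :=
  jacobi_integral_conserved_general m k a ha T hT U hU q hq hadm heom
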